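/- If Γ is a k-regular, ω-clique regular graph on n vertices with smallest adjacency eigenvalue λ_1, then λ_1 ≥ −k/(ω−1). If additionally k < ω(ω−1), then λ_1 = −k/(ω−1) with multiplicity at least n − nk/(ω(ω−1)). -/

import Mathlib

/-!
Let `N` be the incidence matrix between the `ω`-cliques and the vertices. Since every edge lies
in exactly one `ω`-clique, and every vertex in `c = k/(ω-1)` of them, `Nᵀ N = A + c I`.
Hence `A + c I` is positive semidefinite, giving `λ₁ ≥ -c`, and its rank is at most the number
`nk/(ω(ω-1))` of `ω`-cliques. When `k < ω(ω-1)` this is less than `n`, so `-c` is an eigenvalue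
whose multiplicity is at least `n - nk/(ω(ω-1))`.
-/

open SimpleGraph

/-- A graph is `ω`-clique regular if its edge set is nonempty and every edge lies in a
unique clique of order `ω`. -/
def IsCliqueRegular {V : Type*} (G : SimpleGraph V) (ω : ℕ) : Prop :=
  G.edgeSet.Nonempty ∧
    ∀ ⦃x y : V⦄, G.Adj x y → ∃! s : Finset V, G.IsNClique ω s ∧ x ∈ s ∧ y ∈ s

open Finset Matrix

namespace Matrix
variable {K n : Type*} [Field K] [Fintype n] [DecidableEq n]

theorem card_le_rank_sub_add_rootMultiplicity (A : Matrix n n K) (μ : K) :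
    Fintype.card n ≤ (A - μ • 1).rank + A.charpoly.rootMultiplicity μ := by
  have hker : LinearMap.ker (A - μ • 1).mulVecLin = Module.End.eigenspace (toLin' A) μ := by
    rw [Module.End.eigenspace_def, ← toLin'_apply', map_sub, map_smul, toLin'_one]
    rfl
  calc Fintype.card n
      = (A - μ • 1).rank + Module.finrank K (LinearMap.ker (A - μ • 1).mulVecLin) := by
        rw [rank, LinearMap.finrank_range_add_finrank_ker, Module.finrank_fintype_fun_eq_card]
    _ ≤ (A - μ • 1).rank + A.charpoly.rootMultiplicity μ := by
        grw [hker, LinearMap.finrank_eigenspace_le, charpoly_toLin']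

theorem mem_spectrum_of_rank_sub_lt_card {A : Matrix n n K} {μ : K}
    (h : (A - μ • 1).rank < Fintype.card n) : μ ∈ spectrum K A := by
  have hpos : 0 < A.charpoly.rootMultiplicity μ := by
    have := A.card_le_rank_sub_add_rootMultiplicity μ
    omega
  rwa [mem_spectrum_iff_isRoot_charpoly,
    ← Polynomial.rootMultiplicity_pos A.charpoly_monic.ne_zero]

open scoped ComplexOrder in
theorem le_of_mem_spectrum_of_posSemidef_sub {𝕜 : Type*} [RCLike 𝕜] {A : Matrix n n 𝕜}
    {μ l : 𝕜} (hA : (A - μ • 1).PosSemidef) (hl : l ∈ spectrum 𝕜 A) : μ ≤ l := by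
  have hshift : l + -μ ∈ spectrum 𝕜 (algebraMap 𝕜 _ (-μ) + A) := spectrum.add_mem_add_iff.mpr hl
  rw [Algebra.algebraMap_eq_smul_one, neg_smul, neg_add_eq_sub] at hshift
  have hnonneg := (posSemidef_iff_isHermitian_and_spectrum_nonneg.mp hA).2 hshift
  simpa [← sub_eq_add_neg, sub_nonneg] using hnonneg

end Matrix

section MembershipMatrix
variable {V : Type*} [DecidableEq V] (R : Type*) [Semiring R]

def membershipMatrix (B : Finset (Finset V)) : Matrix B V R :=
  Matrix.of fun s x => if x ∈ (s : Finset V) then 1 else 0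

theorem transpose_membershipMatrix_mul_apply (B : Finset (Finset V)) (x y : V) :
    ((membershipMatrix R B)ᵀ * membershipMatrix R B) x y = #{s ∈ B | x ∈ s ∧ y ∈ s} := by
  simp only [Matrix.mul_apply, Matrix.transpose_apply, membershipMatrix, Matrix.of_apply,
    mul_ite, mul_one, mul_zero, ← ite_and]
  rw [Finset.sum_coe_sort B (fun s => if y ∈ s ∧ x ∈ s then (1 : R) else 0), Finset.sum_boole]
  simp only [and_comm]

end MembershipMatrix

namespace IsCliqueRegular
variable {V : Type*} {G : SimpleGraph V} {ω : ℕ}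

theorem two_le (hcr : IsCliqueRegular G ω) : 2 ≤ ω := by
  obtain ⟨⟨x, y⟩, hxy⟩ := hcr.1
  obtain ⟨s, ⟨hs, hx, hy⟩, -⟩ := hcr.2 hxy
  classical
  calc 2 = #{x, y} := (card_pair hxy.ne).symm
    _ ≤ #s := card_le_card (insert_subset hx (singleton_subset_iff.mpr hy))
    _ = ω := hs.card_eq

variable [Fintype V] [DecidableEq V] [DecidableRel G.Adj]

theorem card_filter_mem_mul_sub_one_eq_degree (hcr : IsCliqueRegular G ω) (x : V) :
    #{s ∈ G.cliqueFinset ω | x ∈ s} * (ω - 1) = G.degree x := by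
  have hnbr : G.neighborFinset x = {s ∈ G.cliqueFinset ω | x ∈ s}.biUnion (·.erase x) := by
    ext y
    simp only [mem_neighborFinset, mem_biUnion, mem_filter, mem_cliqueFinset_iff, mem_erase]
    constructor
    · intro hxy
      obtain ⟨s, ⟨hs, hx, hy⟩, -⟩ := hcr.2 hxy
      exact ⟨s, ⟨hs, hx⟩, hxy.ne', hy⟩
    · rintro ⟨s, ⟨hs, hx⟩, hyx, hy⟩
      exact hs.isClique hx hy hyx.symm
  have hdisj : (({s ∈ G.cliqueFinset ω | x ∈ s} : Finset _) : Set (Finset V)).PairwiseDisjoint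
      (·.erase x) := by
    intro s hs t ht hst
    simp only [mem_coe, mem_filter, mem_cliqueFinset_iff] at hs ht
    refine disjoint_left.mpr fun y hys hyt => hst ?_
    rw [mem_erase] at hys hyt
    obtain ⟨u, -, huniq⟩ := hcr.2 (hs.1.isClique hs.2 hys.2 hys.1.symm)
    exact (huniq s ⟨hs.1, hs.2, hys.2⟩).trans (huniq t ⟨ht.1, ht.2, hyt.2⟩).symm
  rw [← card_neighborFinset_eq_degree, hnbr, card_biUnion hdisj, ← smul_eq_mul, ← sum_const]
  refine sum_congr rfl fun s hs => ?_
  rw [mem_filter, mem_cliqueFinset_iff] at hs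
  rw [card_erase_of_mem hs.2, hs.1.card_eq]

theorem card_filter_mem_mem_of_ne (hcr : IsCliqueRegular G ω) {x y : V} (hxy : x ≠ y) :
    #{s ∈ G.cliqueFinset ω | x ∈ s ∧ y ∈ s} = if G.Adj x y then 1 else 0 := by
  split_ifs with hadj
  · obtain ⟨s, hs, huniq⟩ := hcr.2 hadj
    rw [card_eq_one]
    refine ⟨s, eq_singleton_iff_unique_mem.mpr ⟨?_, fun t ht => ?_⟩⟩
    · simpa [mem_cliqueFinset_iff] using hs
    · simp only [mem_filter, mem_cliqueFinset_iff] at ht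
      exact huniq t ⟨ht.1, ht.2⟩
  · refine card_eq_zero.mpr (filter_eq_empty_iff.mpr fun s hs hxys => hadj ?_)
    exact (mem_cliqueFinset_iff.mp hs).isClique hxys.1 hxys.2 hxy

theorem transpose_membershipMatrix_mul (R : Type*) [Semiring R] (hcr : IsCliqueRegular G ω) :
    (membershipMatrix R (G.cliqueFinset ω))ᵀ * membershipMatrix R (G.cliqueFinset ω) =
      G.adjMatrix R + diagonal fun x => (#{s ∈ G.cliqueFinset ω | x ∈ s} : R) := by
  ext x y
  rw [transpose_membershipMatrix_mul_apply, Matrix.add_apply, adjMatrix_apply]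
  by_cases hxy : x = y
  · subst hxy
    simp
  · rw [hcr.card_filter_mem_mem_of_ne hxy, diagonal_apply_ne _ hxy]
    split_ifs <;> simp

variable {k : ℕ}

theorem card_filter_mem_eq_div {K : Type*} [Field K] [CharZero K] (hcr : IsCliqueRegular G ω)
    (hreg : G.IsRegularOfDegree k) (x : V) :
    (#{s ∈ G.cliqueFinset ω | x ∈ s} : K) = k / (ω - 1) := by
  have hω := hcr.two_le
  rw [← Nat.cast_one, ← Nat.cast_sub (by omega), eq_div_iff (Nat.cast_ne_zero.mpr (by omega)),
    ← hreg x, ← hcr.card_filter_mem_mul_sub_one_eq_degree x, Nat.cast_mul]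

theorem transpose_membershipMatrix_mul_of_isRegularOfDegree {K : Type*} [Field K] [CharZero K]
    (hcr : IsCliqueRegular G ω) (hreg : G.IsRegularOfDegree k) :
    (membershipMatrix K (G.cliqueFinset ω))ᵀ * membershipMatrix K (G.cliqueFinset ω) =
      G.adjMatrix K + ((k : K) / (ω - 1)) • 1 := by
  rw [hcr.transpose_membershipMatrix_mul K, smul_one_eq_diagonal]
  simp_rw [hcr.card_filter_mem_eq_div hreg]

theorem card_cliqueFinset_mul (hcr : IsCliqueRegular G ω) (hreg : G.IsRegularOfDegree k) :
    #(G.cliqueFinset ω) * (ω * (ω - 1)) = Fintype.card V * k := by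
  obtain ⟨⟨x₀, -⟩, -⟩ := hcr.1
  have hc : ∀ x, #{s ∈ G.cliqueFinset ω | x ∈ s} = #{s ∈ G.cliqueFinset ω | x₀ ∈ s} :=
    fun x => Nat.eq_of_mul_eq_mul_right (m := ω - 1) (by have := hcr.two_le; omega) <| by
      rw [hcr.card_filter_mem_mul_sub_one_eq_degree, hcr.card_filter_mem_mul_sub_one_eq_degree,
        hreg, hreg]
  have hsum := sum_card hc
  rw [sum_const_nat fun s hs => (mem_cliqueFinset_iff.mp hs).card_eq] at hsum
  rw [← mul_assoc, hsum, mul_assoc, hcr.card_filter_mem_mul_sub_one_eq_degree, hreg]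

theorem card_cliqueFinset_lt (hcr : IsCliqueRegular G ω) (hreg : G.IsRegularOfDegree k)
    (hk : k < ω * (ω - 1)) : #(G.cliqueFinset ω) < Fintype.card V := by
  obtain ⟨⟨x₀, -⟩, -⟩ := hcr.1
  have hV : 0 < Fintype.card V := Fintype.card_pos_iff.mpr ⟨x₀⟩
  refine Nat.lt_of_mul_lt_mul_right (a := ω * (ω - 1)) ?_
  rw [hcr.card_cliqueFinset_mul hreg]
  exact Nat.mul_lt_mul_of_pos_left hk hV

theorem cast_card_cliqueFinset {K : Type*} [Field K] [CharZero K] (hcr : IsCliqueRegular G ω)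
    (hreg : G.IsRegularOfDegree k) :
    (#(G.cliqueFinset ω) : K) = Fintype.card V * k / (ω * (ω - 1)) := by
  have hω := hcr.two_le
  have hne : ω * (ω - 1) ≠ 0 := Nat.mul_ne_zero (by omega) (by omega)
  rw [← Nat.cast_one, ← Nat.cast_sub (by omega), ← Nat.cast_mul, ← Nat.cast_mul,
    eq_div_iff (by exact_mod_cast hne), ← Nat.cast_mul, hcr.card_cliqueFinset_mul hreg]

end IsCliqueRegular

/-- If `Γ` is `k`-regular and `ω`-clique regular with smallest adjacency eigenvalue `λ₁`,
then `λ₁ ≥ −k/(ω−1)`; if moreover `k < ω(ω−1)`, then `λ₁ = −k/(ω−1)` with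
multiplicity at least `n − nk/(ω(ω−1))`. -/
theorem stmt10 {V : Type*} [Fintype V] [DecidableEq V] (G : SimpleGraph V)
    [DecidableRel G.Adj] (ω k : ℕ) (lam1 : ℝ)
    (hreg : G.IsRegularOfDegree k) (hcr : IsCliqueRegular G ω)
    (hmem : lam1 ∈ spectrum ℝ (G.adjMatrix ℝ))
    (hmin : ∀ μ ∈ spectrum ℝ (G.adjMatrix ℝ), lam1 ≤ μ) :
    -((k : ℝ) / ((ω : ℝ) - 1)) ≤ lam1 ∧
      (k < ω * (ω - 1) →
        lam1 = -((k : ℝ) / ((ω : ℝ) - 1)) ∧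
          (Fintype.card V : ℝ) -
              (Fintype.card V : ℝ) * k / ((ω : ℝ) * ((ω : ℝ) - 1)) ≤
            ((G.adjMatrix ℝ).charpoly.rootMultiplicity lam1 : ℝ)) := by
  set A := G.adjMatrix ℝ
  set N := membershipMatrix ℝ (G.cliqueFinset ω)
  set c : ℝ := k / (ω - 1)
  have hgram : Nᴴ * N = A - (-c) • 1 := by
    rw [conjTranspose_eq_transpose_of_trivial,
      hcr.transpose_membershipMatrix_mul_of_isRegularOfDegree hreg, neg_smul, sub_neg_eq_add]
  have hlow : -c ≤ lam1 :=
    le_of_mem_spectrum_of_posSemidef_sub (hgram ▸ posSemidef_conjTranspose_mul_self N) hmem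
  refine ⟨hlow, fun hk => ?_⟩
  have hrank : (A - (-c) • 1).rank ≤ #(G.cliqueFinset ω) := by
    rw [← hgram, rank_conjTranspose_mul_self]
    exact (rank_le_card_height N).trans_eq (Fintype.card_coe _)
  have hspec : -c ∈ spectrum ℝ A :=
    mem_spectrum_of_rank_sub_lt_card (hrank.trans_lt (hcr.card_cliqueFinset_lt hreg hk))
  obtain rfl : lam1 = -c := le_antisymm (hmin _ hspec) hlow
  refine ⟨rfl, ?_⟩
  have hmult : (Fintype.card V : ℝ) ≤ #(G.cliqueFinset ω) + A.charpoly.rootMultiplicity (-c) := by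
    exact_mod_cast (A.card_le_rank_sub_add_rootMultiplicity (-c)).trans (by omega)
  rw [← hcr.cast_card_cliqueFinset hreg]
  linarith
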